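/- Let p > 1, let (X,d,m) be a metric measure space and let (E,F) be a p-energy on (X,d,m). Then every u ∈ F admits a quasi-continuous modification ũ, i.e. a quasi-continuous function with ũ = u m-a.e. on X. Moreover, if C ⊆ F ∩ C_c(X) is E_1-dense in F, then ũ can be chosen so that there exist a sequence {u_n} ⊆ C that is E_1-convergent to u and an increasing sequence of closed sets {F_k} with cap_1(X∖F_k) → 0, such that {u_n} converges uniformly to ũ on each F_k. -/

import Mathlib

/-- A metric measure space: a locally compact separable metric space equipped with a
positive Radon measure with full support. -/
structure MetricMeasureSpace : Type 1 where
  X : Type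
  [ms : MetricSpace X]
  [lc : LocallyCompactSpace X]
  [sep : TopologicalSpace.SeparableSpace X]
  [mb : MeasurableSpace X]
  [bs : BorelSpace X]
  m : MeasureTheory.Measure X
  [radon : m.Regular]
  [fullSupport : m.IsOpenPosMeasure]

attribute [instance] MetricMeasureSpace.ms MetricMeasureSpace.lc MetricMeasureSpace.sep
  MetricMeasureSpace.mb MetricMeasureSpace.bs MetricMeasureSpace.radon
  MetricMeasureSpace.fullSupport


open MeasureTheory Metric Set Filter Topology ENNReal

noncomputable section

/-- A doubling function (a homeomorphism of `[0,∞)`, hence strictly increasing with `Φ 0 = 0`)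
with doubling constant `C`. -/
structure DoublingFn (Φ : ℝ → ℝ) (C : ℝ) : Prop where
  map_zero : Φ 0 = 0
  pos : ∀ r : ℝ, 0 < r → 0 < Φ r
  strictMonoOn : StrictMonoOn Φ (Set.Ici 0)
  continuousOn : ContinuousOn Φ (Set.Ici 0)
  surjOn : Set.SurjOn Φ (Set.Ici 0) (Set.Ici 0)
  one_lt : 1 < C
  doubling : ∀ r : ℝ, 0 < r → Φ (2 * r) ≤ C * Φ r

/-- Two-sided power scaling assumption on a scaling function `Ψ`. -/
def PowerScaling (Ψ : ℝ → ℝ) : Prop :=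
  ∃ β₁ β₂ C : ℝ, 0 < β₁ ∧ β₁ ≤ β₂ ∧ 1 < C ∧
    ∀ r R : ℝ, 0 < r → r ≤ R →
      (1 / C) * (R / r) ^ β₁ ≤ Ψ R / Ψ r ∧ Ψ R / Ψ r ≤ C * (R / r) ^ β₂

/-- The two-sided `p`-Clarkson inequality for the quadruple
`a = E(f+g)`, `b = E(f−g)`, `c = E(f)`, `d = E(g)`. -/
def ClarksonPair (p a b c d : ℝ) : Prop :=
  (p ≤ 2 → 2 * (c ^ (1 / (p - 1)) + d ^ (1 / (p - 1))) ^ (p - 1) ≤ a + b) ∧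
  (2 ≤ p → a + b ≤ 2 * (c ^ (1 / (p - 1)) + d ^ (1 / (p - 1))) ^ (p - 1))

/-- The chain condition (CC). -/
def ChainCond (X : Type*) [MetricSpace X] : Prop :=
  ∃ C : ℝ, 0 < C ∧ ∀ x y : X, ∀ n : ℕ, 0 < n →
    ∃ c : ℕ → X, c 0 = x ∧ c n = y ∧
      ∀ k : ℕ, 1 ≤ k → k ≤ n → dist (c k) (c (k - 1)) ≤ C * dist x y / n

variable {X : Type*}

/-- A `p`-energy on a metric measure space `(X, d, m)`. The domain `F` is a dense
subspace of `L^p(X; m)` and `E` satisfies the semi-norm, closedness (Banach),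
Markovian, regularity, strong locality and `p`-Clarkson axioms. -/
structure PEnergy (p : ℝ) [MetricSpace X] [MeasurableSpace X] (m : Measure X) where
  F : Set (X → ℝ)
  E : (X → ℝ) → ℝ
  memLp : ∀ f ∈ F, MemLp f (ENNReal.ofReal p) m
  add_mem : ∀ f ∈ F, ∀ g ∈ F, f + g ∈ F
  smul_mem : ∀ (c : ℝ), ∀ f ∈ F, c • f ∈ F
  nonneg : ∀ f ∈ F, 0 ≤ E f
  norm_smul : ∀ (c : ℝ), ∀ f ∈ F, E (c • f) ^ (1 / p) = |c| * E f ^ (1 / p)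
  norm_triangle : ∀ f ∈ F, ∀ g ∈ F, E (f + g) ^ (1 / p) ≤ E f ^ (1 / p) + E g ^ (1 / p)
  denseLp : ∀ f : X → ℝ, MemLp f (ENNReal.ofReal p) m → ∀ ε : ℝ, 0 < ε →
    ∃ g ∈ F, eLpNorm (f - g) (ENNReal.ofReal p) m < ENNReal.ofReal ε
  complete : ∀ u : ℕ → X → ℝ, (∀ n, u n ∈ F) →
    (∀ ε : ℝ, 0 < ε → ∃ N : ℕ, ∀ i ≥ N, ∀ j ≥ N,
      E (u i - u j) ^ (1 / p) + (eLpNorm (u i - u j) (ENNReal.ofReal p) m).toReal < ε) →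
    ∃ f ∈ F, Tendsto
      (fun n => E (u n - f) ^ (1 / p) + (eLpNorm (u n - f) (ENNReal.ofReal p) m).toReal)
      atTop (𝓝 0)
  markovian : ∀ φ : ℝ → ℝ, Continuous φ → φ 0 = 0 → (∀ s t : ℝ, |φ t - φ s| ≤ |t - s|) →
    ∀ f ∈ F, φ ∘ f ∈ F ∧ E (φ ∘ f) ≤ E f
  regular_unifDense : ∀ g : X → ℝ, Continuous g → HasCompactSupport g → ∀ ε : ℝ, 0 < ε →
    ∃ f ∈ F, Continuous f ∧ HasCompactSupport f ∧ ∀ x, |f x - g x| ≤ ε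
  regular_energyDense : ∀ f ∈ F, ∀ ε : ℝ, 0 < ε → ∃ g ∈ F, Continuous g ∧ HasCompactSupport g ∧
    E (f - g) ^ (1 / p) + (eLpNorm (f - g) (ENNReal.ofReal p) m).toReal < ε
  stronglyLocal : ∀ f ∈ F, ∀ g ∈ F, HasCompactSupport f → HasCompactSupport g →
    (∃ U : Set X, IsOpen U ∧ tsupport f ⊆ U ∧ ∃ c : ℝ, ∀ x ∈ U, g x = c) →
    E (f + g) = E f + E g
  clarkson : ∀ f ∈ F, ∀ g ∈ F, ClarksonPair p (E (f + g)) (E (f - g)) (E f) (E g)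

/-- A `p`-energy measure associated with a `p`-energy `(E, F)`. -/
structure PEnergyMeasure (p : ℝ) [MetricSpace X] [MeasurableSpace X] (m : Measure X)
    (PE : PEnergy p m) where
  Γ : (X → ℝ) → Measure X
  radon : ∀ f ∈ PE.F, (Γ f).Regular
  total : ∀ f ∈ PE.F, Γ f Set.univ = ENNReal.ofReal (PE.E f)
  norm_smul : ∀ A : Set X, MeasurableSet A → ∀ (c : ℝ), ∀ f ∈ PE.F,
    (Γ (c • f) A).toReal ^ (1 / p) = |c| * (Γ f A).toReal ^ (1 / p)
  norm_triangle : ∀ A : Set X, MeasurableSet A → ∀ f ∈ PE.F, ∀ g ∈ PE.F,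
    (Γ (f + g) A).toReal ^ (1 / p) ≤ (Γ f A).toReal ^ (1 / p) + (Γ g A).toReal ^ (1 / p)
  locality : ∀ A : Set X, MeasurableSet A →
    ∀ f ∈ PE.F, ∀ g ∈ PE.F, Continuous f → HasCompactSupport f →
      Continuous g → HasCompactSupport g →
      (∃ c : ℝ, ∀ x ∈ A, f x - g x = c) → Γ f A = Γ g A
  clarkson : ∀ A : Set X, MeasurableSet A → ∀ f ∈ PE.F, ∀ g ∈ PE.F,
    ClarksonPair p (Γ (f + g) A).toReal (Γ (f - g) A).toReal (Γ f A).toReal (Γ g A).toReal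
  chainRule : ∀ f ∈ PE.F, Continuous f → HasCompactSupport f →
    ∀ φ : ℝ → ℝ, ContDiff ℝ 1 φ → φ ∘ f ∈ PE.F →
      Γ (φ ∘ f) = (Γ f).withDensity fun x => ENNReal.ofReal (|deriv φ (f x)| ^ p)

/-- Volume doubling condition (VD). -/
def VolDoubling [MetricSpace X] [MeasurableSpace X] (m : Measure X) : Prop :=
  ∃ C : ℝ, 0 < C ∧ ∀ (x : X) (r : ℝ), 0 < r →
    m (ball x (2 * r)) ≤ ENNReal.ofReal C * m (ball x r)

/-- Volume regularity condition V(Φ). -/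
def VolRegular [MetricSpace X] [MeasurableSpace X] (m : Measure X) (Φ : ℝ → ℝ) : Prop :=
  ∃ C : ℝ, 0 < C ∧ ∀ (x : X) (r : ℝ), 0 < r →
    ENNReal.ofReal r < EMetric.diam (Set.univ : Set X) →
      ENNReal.ofReal (Φ r / C) ≤ m (ball x r) ∧ m (ball x r) ≤ ENNReal.ofReal (C * Φ r)

/-- The Poincaré inequality PI(Ψ). -/
def PoincareIneq (p : ℝ) [MetricSpace X] [MeasurableSpace X] (m : Measure X)
    (PE : PEnergy p m) (GM : PEnergyMeasure p m PE) (Ψ : ℝ → ℝ) : Prop :=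
  ∃ C : ℝ, 0 < C ∧ ∃ A : ℝ, 1 ≤ A ∧ ∀ (x : X) (r : ℝ), 0 < r →
    ENNReal.ofReal (A * r) < EMetric.diam (Set.univ : Set X) →
    ∀ f ∈ PE.F,
      ∫⁻ y in ball x r, ENNReal.ofReal (|f y - ⨍ z in ball x r, f z ∂m| ^ p) ∂m
        ≤ ENNReal.ofReal (C * Ψ r) * GM.Γ f (ball x (A * r))

/-- The capacity between two sets `A₁` and `A₂` associated with a `p`-energy,
with the convention `sInf ∅ = ∞`. -/
def capBetween (p : ℝ) [MetricSpace X] [MeasurableSpace X] (m : Measure X)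
    (PE : PEnergy p m) (A₁ A₂ : Set X) : ℝ≥0∞ :=
  sInf ((fun φ => ENNReal.ofReal (PE.E φ)) ''
    {φ : X → ℝ | φ ∈ PE.F ∧ (∃ U : Set X, IsOpen U ∧ A₁ ⊆ U ∧ ∀ x ∈ U, φ x = 1) ∧
      (∃ V : Set X, IsOpen V ∧ A₂ ⊆ V ∧ ∀ x ∈ V, φ x = 0)})

/-- Capacity upper bound cap(Ψ)_≤. -/
def CapUpper (p : ℝ) [MetricSpace X] [MeasurableSpace X] (m : Measure X)
    (PE : PEnergy p m) (Ψ : ℝ → ℝ) : Prop :=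
  ∃ C : ℝ, 0 < C ∧ ∃ A : ℝ, 1 < A ∧ ∀ (x : X) (r : ℝ), 0 < r →
    capBetween p m PE (ball x r) (ball x (A * r))ᶜ
      ≤ ENNReal.ofReal C * m (ball x r) / ENNReal.ofReal (Ψ r)

/-- Two-sided capacity bounds cap(Ψ): upper and lower bound with common constants. -/
def CapBounds (p : ℝ) [MetricSpace X] [MeasurableSpace X] (m : Measure X)
    (PE : PEnergy p m) (Ψ : ℝ → ℝ) : Prop :=
  ∃ C : ℝ, 0 < C ∧ ∃ A : ℝ, 1 < A ∧ ∀ (x : X) (r : ℝ), 0 < r →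
    capBetween p m PE (ball x r) (ball x (A * r))ᶜ
      ≤ ENNReal.ofReal C * m (ball x r) / ENNReal.ofReal (Ψ r) ∧
    m (ball x r) / ENNReal.ofReal (C * Ψ r)
      ≤ capBetween p m PE (ball x r) (ball x (A * r))ᶜ

/-- `E₁(u) = E(u) + ‖u‖_{L^p}^p`. -/
def E1 (p : ℝ) [MetricSpace X] [MeasurableSpace X] (m : Measure X) (PE : PEnergy p m)
    (u : X → ℝ) : ℝ :=
  PE.E u + (eLpNorm u (ENNReal.ofReal p) m).toReal ^ p

/-- The directional derivative `E₁(u; v) = (1/p) d/dt E₁(u + t v)|_{t=0}`. -/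
def E1dir (p : ℝ) [MetricSpace X] [MeasurableSpace X] (m : Measure X) (PE : PEnergy p m)
    (u v : X → ℝ) : ℝ :=
  (1 / p) * deriv (fun t : ℝ => E1 p m PE (u + t • v)) 0

/-- The capacity `cap₁` of an open set, with the convention `sInf ∅ = ∞`. -/
def cap1Open (p : ℝ) [MetricSpace X] [MeasurableSpace X] (m : Measure X) (PE : PEnergy p m)
    (A : Set X) : ℝ≥0∞ :=
  sInf ((fun u => ENNReal.ofReal (E1 p m PE u)) ''
    {u : X → ℝ | u ∈ PE.F ∧ ∀ᵐ x ∂(m.restrict A), 1 ≤ u x})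

/-- The capacity `cap₁` of an arbitrary set. -/
def cap1 (p : ℝ) [MetricSpace X] [MeasurableSpace X] (m : Measure X) (PE : PEnergy p m)
    (A : Set X) : ℝ≥0∞ :=
  ⨅ (B : Set X) (_ : IsOpen B) (_ : A ⊆ B), cap1Open p m PE B

/-- `u` is quasi-continuous on `G`. -/
def QuasiContinuousOn (p : ℝ) [MetricSpace X] [MeasurableSpace X] (m : Measure X)
    (PE : PEnergy p m) (u : X → ℝ) (G : Set X) : Prop :=
  ∀ ε : ℝ, 0 < ε → ∃ G' : Set X, IsOpen G' ∧ cap1 p m PE G' < ENNReal.ofReal ε ∧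
    ContinuousOn u (G \ G')

/-- `u` is quasi-continuous (on all of `X`). -/
def QuasiContinuous (p : ℝ) [MetricSpace X] [MeasurableSpace X] (m : Measure X)
    (PE : PEnergy p m) (u : X → ℝ) : Prop :=
  QuasiContinuousOn p m PE u Set.univ

/-- `φ` is a cutoff function for `B(x,r) ⊆ B(x, A·r)`. -/
def IsCutoff (p : ℝ) [MetricSpace X] [MeasurableSpace X] (m : Measure X) (PE : PEnergy p m)
    (x : X) (r A : ℝ) (φ : X → ℝ) : Prop :=
  φ ∈ PE.F ∧ (∀ y, 0 ≤ φ y ∧ φ y ≤ 1) ∧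
    (∃ U : Set X, IsOpen U ∧ closure (ball x r) ⊆ U ∧ ∀ y ∈ U, φ y = 1) ∧
    tsupport φ ⊆ ball x (A * r)

/-- The cutoff Sobolev inequality CS(Ψ). -/
def CutoffSobolev (p : ℝ) [MetricSpace X] [MeasurableSpace X] (m : Measure X)
    (PE : PEnergy p m) (GM : PEnergyMeasure p m PE) (Ψ : ℝ → ℝ) : Prop :=
  ∃ C₁ C₂ A : ℝ, 0 < C₁ ∧ 0 < C₂ ∧ 1 < A ∧
    ∀ (x : X) (r : ℝ), 0 < r → ∃ φ : X → ℝ, IsCutoff p m PE x r A φ ∧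
      ∀ f ∈ PE.F, ∀ ft : X → ℝ, QuasiContinuous p m PE ft → ft =ᵐ[m] f →
        ∫⁻ y in ball x (A * r), ENNReal.ofReal (|ft y| ^ p) ∂(GM.Γ φ)
          ≤ ENNReal.ofReal C₁ * GM.Γ f (ball x (A * r)) +
            ENNReal.ofReal C₂ / ENNReal.ofReal (Ψ r) *
              ∫⁻ y in ball x (A * r), ENNReal.ofReal (|f y| ^ p) ∂m

/-- An `ε`-net. -/
def IsNet [MetricSpace X] (ε : ℝ) (V : Set X) : Prop :=
  (∀ x ∈ V, ∀ y ∈ V, x ≠ y → ε ≤ dist x y) ∧ ∀ z : X, ∃ x ∈ V, dist x z < ε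

/-- The local domain `F_loc`. -/
def FLoc (p : ℝ) [MetricSpace X] [MeasurableSpace X] (m : Measure X) (PE : PEnergy p m) :
    Set (X → ℝ) :=
  {u : X → ℝ | ∀ U : Set X, IsOpen U → IsCompact (closure U) →
    ∃ f ∈ PE.F, ∀ᵐ x ∂(m.restrict U), u x = f x}

/-- `ν` is the energy measure of `u ∈ F_loc`, i.e. `ν` agrees with `Γ(u^#)` on every
relatively compact open set `U` on which `u` has a representative `u^# ∈ F`. -/
def LocalEnergyMeasure (p : ℝ) [MetricSpace X] [MeasurableSpace X] (m : Measure X)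
    (PE : PEnergy p m) (GM : PEnergyMeasure p m PE) (u : X → ℝ) (ν : Measure X) : Prop :=
  ∀ U : Set X, IsOpen U → IsCompact (closure U) → ∀ f ∈ PE.F,
    (∀ᵐ x ∂(m.restrict U), u x = f x) → ν.restrict U = (GM.Γ f).restrict U

/-- The restricted maximal function `M_R ν(x) = sup_{0<r<R} ν(B(x,r))/m(B(x,r))`. -/
def maxFn [MetricSpace X] [MeasurableSpace X] (m ν : Measure X) (R : ℝ) (x : X) : ℝ≥0∞ :=
  ⨆ (r : ℝ) (_ : 0 < r) (_ : r < R), ν (ball x r) / m (ball x r)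

/-- A geodesic metric space: any two points are joined by an isometric embedding of
`[0, dist x y]`. -/
def IsGeodesicSpace (X : Type*) [MetricSpace X] : Prop :=
  ∀ x y : X, ∃ γ : ℝ → X, γ 0 = x ∧ γ (dist x y) = y ∧
    ∀ s ∈ Set.Icc 0 (dist x y), ∀ t ∈ Set.Icc 0 (dist x y), dist (γ s) (γ t) = |s - t|

/-- Membership in the Besov space `B^{p,α}(X,d,m)`. -/
def MemBesov (p α : ℝ) [MetricSpace X] [MeasurableSpace X] (m : Measure X) (f : X → ℝ) :
    Prop :=
  MemLp f (ENNReal.ofReal p) m ∧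
  ∃ M : ℝ≥0∞, M ≠ ⊤ ∧ ∀ r : ℝ, 0 < r → ENNReal.ofReal r < EMetric.diam (Set.univ : Set X) →
    ENNReal.ofReal (1 / r ^ (p * α)) *
      ∫⁻ x, (m (ball x r))⁻¹ * ∫⁻ y in ball x r, ENNReal.ofReal (|f x - f y| ^ p) ∂m ∂m ≤ M

/-- The critical Besov exponent `β_p(X,d,m) = p · α_p(X,d,m)`. -/
def besovCriticalBeta (p : ℝ) (X : Type*) [MetricSpace X] [MeasurableSpace X]
    (m : Measure X) : ℝ :=
  p * sSup {α : ℝ | 0 < α ∧ ∃ f : X → ℝ, MemBesov p α m f ∧ ¬ ∃ c : ℝ, f =ᵐ[m] fun _ => c}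

/-- `ut` is a quasi-continuous modification of `u`. -/
def QCModification (p : ℝ) {X : Type*} [MetricSpace X] [MeasurableSpace X] (m : Measure X)
    (PE : PEnergy p m) (u ut : X → ℝ) : Prop :=
  QuasiContinuous p m PE ut ∧ ut =ᵐ[m] u

/-- A pointwise property holds quasi-everywhere on `A`. -/
def QEOn (p : ℝ) {X : Type*} [MetricSpace X] [MeasurableSpace X] (m : Measure X)
    (PE : PEnergy p m) (A : Set X) (P : X → Prop) : Prop :=
  ∃ N : Set X, cap1 p m PE N = 0 ∧ ∀ x ∈ A \ N, P x

/-- `L_A = {u ∈ F : ũ ≥ 1 q.e. on A}` for an arbitrary set `A`. -/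
def LSet (p : ℝ) {X : Type*} [MetricSpace X] [MeasurableSpace X] (m : Measure X)
    (PE : PEnergy p m) (A : Set X) : Set (X → ℝ) :=
  {u : X → ℝ | u ∈ PE.F ∧ ∃ ut : X → ℝ, QCModification p m PE u ut ∧
    QEOn p m PE A fun x => 1 ≤ ut x}

end

/-!
Choose `uₙ ∈ 𝒞` with `‖uₙ - u‖ ≤ 2 · 4⁻ⁿ` in the norm `E(·)^{1/p} + ‖·‖_{L^p}` of `F`. The jump
`|uₙ₊₁ - uₙ|` exceeds `2⁻ⁿ` only on an open set `Gₙ`, and on `Uₖ = ⋃_{n ≥ k} Gₙ` the series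
`∑_{n ≥ k} 2ⁿ |uₙ₊₁ - uₙ|` is at least `1`. By the Markov property and completeness of `F` this
series converges in `F` to a function of norm `O(2⁻ᵏ)`, so `cap₁(Uₖ) → 0`. Off `Uₖ` the sequence
is uniformly Cauchy, so its pointwise limit `ũ` is continuous on the closed set `Fₖ = Uₖᶜ`, i.e. `ũ`
is quasi-continuous. Since `m ≤ cap₁`, almost every point lies in some `Fₖ`, where `ũ` is also the
a.e. limit of a subsequence of `uₙ → u` in `L^p`; hence `ũ = u` a.e.
-/

theorem tendstoUniformlyOn_limUnder_of_dist_le_half_pow {β α : Type*} [MetricSpace α]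
    [CompleteSpace α] [Nonempty α] {f : ℕ → β → α} {S : Set β} {k : ℕ}
    (h : ∀ x ∈ S, ∀ n, k ≤ n → dist (f n x) (f (n + 1) x) ≤ (1 / 2) ^ n) :
    TendstoUniformlyOn f (fun x => limUnder atTop fun n => f n x) atTop S := by
  have hshift : ∀ x ∈ S, ∀ n,
      dist (f (n + k) x) (f (n + 1 + k) x) ≤ 2 * (1 / 2) ^ k / 2 / 2 ^ n := by
    intro x hx n
    rw [add_right_comm]
    convert h x hx (n + k) (Nat.le_add_left k n) using 1
    rw [pow_add, one_div_pow, one_div_pow]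
    field_simp
  have hbound : ∀ x ∈ S, ∀ n,
      dist (f (n + k) x) (limUnder atTop fun n => f n x) ≤ 2 * (1 / 2) ^ (n + k) := by
    intro x hx n
    obtain ⟨a, ha⟩ := cauchySeq_tendsto_of_complete (cauchySeq_of_le_geometric_two (hshift x hx))
    rw [((tendsto_add_atTop_iff_nat k).1 ha).limUnder_eq]
    convert dist_le_of_le_geometric_two_of_tendsto (hshift x hx) ha n using 1
    rw [pow_add, one_div_pow, one_div_pow]
    field_simp
  rw [Metric.tendstoUniformlyOn_iff]
  intro ε hε
  obtain ⟨N, hN⟩ := exists_pow_lt_of_lt_one (half_pos hε) one_half_lt_one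
  filter_upwards [eventually_ge_atTop (N + k)] with n hn x hx
  obtain ⟨j, rfl⟩ : ∃ j, n = j + k := ⟨n - k, by omega⟩
  rw [dist_comm]
  calc dist (f (j + k) x) _ ≤ 2 * (1 / 2) ^ (j + k) := hbound x hx j
    _ ≤ 2 * (1 / 2) ^ N := by
      gcongr 2 * ?_
      exact pow_le_pow_of_le_one (by norm_num) (by norm_num) (by omega)
    _ < ε := by linarith

def jumpSet {X : Type*} (u : ℕ → X → ℝ) (k : ℕ) : Set X :=
  ⋃ n ≥ k, {x | (1 / 2 : ℝ) ^ n < |u (n + 1) x - u n x|}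

section jumpSet

variable {X : Type*} {u : ℕ → X → ℝ}

theorem isOpen_jumpSet [TopologicalSpace X] (hu : ∀ n, Continuous (u n)) (k : ℕ) :
    IsOpen (jumpSet u k) :=
  isOpen_biUnion fun n _ => isOpen_lt continuous_const ((hu (n + 1)).sub (hu n)).abs

theorem jumpSet_succ_subset (u : ℕ → X → ℝ) (k : ℕ) : jumpSet u (k + 1) ⊆ jumpSet u k :=
  biUnion_mono (fun _ hn => Nat.le_of_succ_le hn) fun _ _ => subset_rfl

theorem dist_le_of_notMem_jumpSet {k : ℕ} {x : X} (hx : x ∉ jumpSet u k) {n : ℕ} (hn : k ≤ n) :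
    dist (u n x) (u (n + 1) x) ≤ (1 / 2) ^ n := by
  rw [Real.dist_eq, abs_sub_comm]
  by_contra h
  exact hx (mem_iUnion₂.2 ⟨n, hn, not_le.1 h⟩)

end jumpSet

namespace PEnergy

variable {X : Type*} [MetricSpace X] [MeasurableSpace X] {p : ℝ} {m : Measure X}
  (PE : PEnergy p m)

def toSubmodule : Submodule ℝ (X → ℝ) where
  carrier := PE.F
  add_mem' {f g} hf hg := PE.add_mem f hf g hg
  zero_mem' := by
    obtain ⟨g, hg, -⟩ := PE.denseLp 0 MemLp.zero 1 one_pos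
    simpa using PE.smul_mem 0 g hg
  smul_mem' c f hf := PE.smul_mem c f hf

theorem sub_mem {f g : X → ℝ} (hf : f ∈ PE.F) (hg : g ∈ PE.F) : f - g ∈ PE.F :=
  PE.toSubmodule.sub_mem hf hg

theorem sum_mem {ι : Type*} (s : Finset ι) {f : ι → X → ℝ} (hf : ∀ i ∈ s, f i ∈ PE.F) :
    ∑ i ∈ s, f i ∈ PE.F :=
  PE.toSubmodule.sum_mem hf

theorem abs_comp_mem {f : X → ℝ} (hf : f ∈ PE.F) : abs ∘ f ∈ PE.F :=
  (PE.markovian abs continuous_abs abs_zero (fun s t => abs_abs_sub_abs_le_abs_sub t s) f hf).1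

theorem E_abs_comp_le {f : X → ℝ} (hf : f ∈ PE.F) : PE.E (abs ∘ f) ≤ PE.E f :=
  (PE.markovian abs continuous_abs abs_zero (fun s t => abs_abs_sub_abs_le_abs_sub t s) f hf).2

theorem E_neg (hp : 0 < p) {f : X → ℝ} (hf : f ∈ PE.F) : PE.E (-f) = PE.E f := by
  have h := PE.norm_smul (-1) f hf
  rw [abs_neg, abs_one, one_mul, neg_one_smul] at h
  rwa [Real.rpow_left_inj (PE.nonneg _ (PE.toSubmodule.neg_mem hf)) (PE.nonneg f hf)
    (one_div_ne_zero hp.ne')] at h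

theorem E1_sub_comm (hp : 0 < p) {f g : X → ℝ} (hf : f ∈ PE.F) (hg : g ∈ PE.F) :
    E1 p m PE (f - g) = E1 p m PE (g - f) := by
  rw [E1, E1, ← neg_sub g f, PE.E_neg hp (PE.sub_mem hg hf), eLpNorm_neg]

theorem E1_nonneg {f : X → ℝ} (hf : f ∈ PE.F) : 0 ≤ E1 p m PE f :=
  add_nonneg (PE.nonneg f hf) (Real.rpow_nonneg ENNReal.toReal_nonneg p)

noncomputable def graphNorm (f : X → ℝ) : ℝ :=
  PE.E f ^ (1 / p) + (eLpNorm f (ENNReal.ofReal p) m).toReal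

theorem graphNorm_nonneg {f : X → ℝ} (hf : f ∈ PE.F) : 0 ≤ PE.graphNorm f :=
  add_nonneg (Real.rpow_nonneg (PE.nonneg f hf) _) ENNReal.toReal_nonneg

theorem graphNorm_smul (c : ℝ) {f : X → ℝ} (hf : f ∈ PE.F) :
    PE.graphNorm (c • f) = |c| * PE.graphNorm f := by
  rw [graphNorm, graphNorm, PE.norm_smul c f hf, eLpNorm_const_smul, ENNReal.toReal_mul, mul_add,
    toReal_enorm, Real.norm_eq_abs]

theorem graphNorm_sub_comm {f g : X → ℝ} (hf : f ∈ PE.F) (hg : g ∈ PE.F) :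
    PE.graphNorm (f - g) = PE.graphNorm (g - f) := by
  simpa using PE.graphNorm_smul (-1) (PE.sub_mem hg hf)

theorem graphNorm_add_le (hp : 1 ≤ p) {f g : X → ℝ} (hf : f ∈ PE.F) (hg : g ∈ PE.F) :
    PE.graphNorm (f + g) ≤ PE.graphNorm f + PE.graphNorm g := by
  have hE := PE.norm_triangle f hf g hg
  have hLp : (eLpNorm (f + g) (ENNReal.ofReal p) m).toReal
      ≤ (eLpNorm f (ENNReal.ofReal p) m).toReal + (eLpNorm g (ENNReal.ofReal p) m).toReal :=
    ENNReal.toReal_le_add (eLpNorm_add_le (PE.memLp f hf).1 (PE.memLp g hg).1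
      (ENNReal.one_le_ofReal.2 hp)) (PE.memLp f hf).eLpNorm_ne_top (PE.memLp g hg).eLpNorm_ne_top
  rw [graphNorm, graphNorm, graphNorm]
  linarith

theorem graphNorm_sub_le (hp : 1 ≤ p) {f g : X → ℝ} (hf : f ∈ PE.F) (hg : g ∈ PE.F) :
    PE.graphNorm (f - g) ≤ PE.graphNorm f + PE.graphNorm g := by
  have h := PE.graphNorm_add_le hp hf (PE.toSubmodule.neg_mem hg)
  rwa [← sub_eq_add_neg, ← neg_one_smul ℝ g, PE.graphNorm_smul _ hg, abs_neg, abs_one,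
    one_mul] at h

theorem graphNorm_sum_le (hp : 1 ≤ p) {ι : Type*} (s : Finset ι) {f : ι → X → ℝ}
    (hf : ∀ i ∈ s, f i ∈ PE.F) : PE.graphNorm (∑ i ∈ s, f i) ≤ ∑ i ∈ s, PE.graphNorm (f i) := by
  classical
  induction s using Finset.induction_on with
  | empty => simpa using (PE.graphNorm_smul 0 PE.toSubmodule.zero_mem).le
  | insert a s ha ih =>
    rw [Finset.sum_insert ha, Finset.sum_insert ha]
    have hs : ∀ i ∈ s, f i ∈ PE.F := fun i hi => hf i (Finset.mem_insert_of_mem hi)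
    exact (PE.graphNorm_add_le hp (hf a (s.mem_insert_self a)) (PE.sum_mem s hs)).trans
      (add_le_add le_rfl (ih hs))

theorem graphNorm_abs_comp_le (hp : 0 < p) {f : X → ℝ} (hf : f ∈ PE.F) :
    PE.graphNorm (abs ∘ f) ≤ PE.graphNorm f := by
  have hLp : eLpNorm (abs ∘ f) (ENNReal.ofReal p) m = eLpNorm f (ENNReal.ofReal p) m :=
    eLpNorm_norm f
  rw [graphNorm, graphNorm, hLp]
  gcongr
  · exact PE.nonneg _ (PE.abs_comp_mem hf)
  · exact PE.E_abs_comp_le hf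

theorem E_le_graphNorm_rpow (hp : 0 < p) {f : X → ℝ} (hf : f ∈ PE.F) :
    PE.E f ≤ PE.graphNorm f ^ p := by
  calc PE.E f = (PE.E f ^ (1 / p)) ^ p := by
        rw [← Real.rpow_mul (PE.nonneg f hf), one_div_mul_cancel hp.ne', Real.rpow_one]
    _ ≤ PE.graphNorm f ^ p := by
        gcongr
        exacts [Real.rpow_nonneg (PE.nonneg f hf) _, le_add_of_nonneg_right ENNReal.toReal_nonneg]

theorem eLpNorm_toReal_le_graphNorm {f : X → ℝ} (hf : f ∈ PE.F) :
    (eLpNorm f (ENNReal.ofReal p) m).toReal ≤ PE.graphNorm f :=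
  le_add_of_nonneg_left (Real.rpow_nonneg (PE.nonneg f hf) _)

theorem E1_le_graphNorm (hp : 0 < p) {f : X → ℝ} (hf : f ∈ PE.F) :
    E1 p m PE f ≤ 2 * PE.graphNorm f ^ p := by
  have hLp : (eLpNorm f (ENNReal.ofReal p) m).toReal ^ p ≤ PE.graphNorm f ^ p := by
    gcongr
    exact PE.eLpNorm_toReal_le_graphNorm hf
  rw [E1]
  linarith [PE.E_le_graphNorm_rpow hp hf]

theorem graphNorm_le_E1 (hp : 0 < p) {f : X → ℝ} (hf : f ∈ PE.F) :
    PE.graphNorm f ≤ 2 * E1 p m PE f ^ (1 / p) := by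
  have hE : 0 ≤ PE.E f := PE.nonneg f hf
  have hN : 0 ≤ (eLpNorm f (ENNReal.ofReal p) m).toReal := ENNReal.toReal_nonneg
  have h1 : PE.E f ^ (1 / p) ≤ E1 p m PE f ^ (1 / p) := by
    gcongr
    exact le_add_of_nonneg_right (Real.rpow_nonneg hN p)
  have h2 : (eLpNorm f (ENNReal.ofReal p) m).toReal ≤ E1 p m PE f ^ (1 / p) := by
    calc (eLpNorm f (ENNReal.ofReal p) m).toReal
        = ((eLpNorm f (ENNReal.ofReal p) m).toReal ^ p) ^ (1 / p) := by
          rw [← Real.rpow_mul hN, mul_one_div_cancel hp.ne', Real.rpow_one]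
      _ ≤ E1 p m PE f ^ (1 / p) := by
          gcongr
          exact le_add_of_nonneg_left hE
  rw [graphNorm]
  linarith

theorem graphNorm_sum_range_sub_le_dist (hp : 1 ≤ p) {f : ℕ → X → ℝ} (hf : ∀ n, f n ∈ PE.F)
    (a b : ℕ) :
    PE.graphNorm ((∑ i ∈ Finset.range a, f i) - ∑ i ∈ Finset.range b, f i)
      ≤ dist (∑ i ∈ Finset.range a, PE.graphNorm (f i))
          (∑ i ∈ Finset.range b, PE.graphNorm (f i)) := by
  wlog hba : b ≤ a generalizing a b
  · rw [PE.graphNorm_sub_comm (PE.sum_mem _ fun i _ => hf i) (PE.sum_mem _ fun i _ => hf i),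
      dist_comm]
    exact this b a (le_of_not_ge hba)
  rw [← Finset.sum_Ico_eq_sub _ hba, Real.dist_eq,
    ← Finset.sum_Ico_eq_sub (fun i => PE.graphNorm (f i)) hba]
  exact (PE.graphNorm_sum_le hp _ fun i _ => hf i).trans (le_abs_self _)

theorem exists_tendsto_graphNorm_of_summable (hp : 1 ≤ p) {f : ℕ → X → ℝ}
    (hf : ∀ n, f n ∈ PE.F) (hs : Summable fun n => PE.graphNorm (f n)) :
    ∃ w ∈ PE.F,
      Tendsto (fun N => PE.graphNorm ((∑ i ∈ Finset.range N, f i) - w)) atTop (𝓝 0) :=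
  PE.complete _ (fun _ => PE.sum_mem _ fun i _ => hf i) fun ε hε =>
    (Metric.cauchySeq_iff.1 hs.hasSum.tendsto_sum_nat.cauchySeq ε hε).imp fun _ hN i hi j hj =>
      (PE.graphNorm_sum_range_sub_le_dist hp hf i j).trans_lt (hN i hi j hj)

theorem exists_seq_tendsto_ae_of_tendsto_graphNorm (hp : 0 < p) {f : ℕ → X → ℝ} {g : X → ℝ}
    (hf : ∀ n, f n ∈ PE.F) (hg : g ∈ PE.F)
    (h : Tendsto (fun n => PE.graphNorm (f n - g)) atTop (𝓝 0)) :
    ∃ ns : ℕ → ℕ, StrictMono ns ∧ ∀ᵐ x ∂m, Tendsto (fun i => f (ns i) x) atTop (𝓝 (g x)) := by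
  have hLp : Tendsto (fun n => eLpNorm (f n - g) (ENNReal.ofReal p) m) atTop (𝓝 0) := by
    rw [← ENNReal.tendsto_toReal_zero_iff fun n =>
      (PE.memLp _ (PE.sub_mem (hf n) hg)).eLpNorm_ne_top]
    exact squeeze_zero (fun n => ENNReal.toReal_nonneg)
      (fun n => PE.eLpNorm_toReal_le_graphNorm (PE.sub_mem (hf n) hg)) h
  exact (tendstoInMeasure_of_tendsto_eLpNorm (ENNReal.ofReal_pos.2 hp).ne'
    (fun n => (PE.memLp _ (hf n)).1) (PE.memLp g hg).1 hLp).exists_seq_tendsto_ae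

theorem exists_ae_le_of_summable_graphNorm (hp : 1 ≤ p) {f : ℕ → X → ℝ}
    (hf : ∀ n, f n ∈ PE.F) (hnonneg : ∀ n x, 0 ≤ f n x)
    (hs : Summable fun n => PE.graphNorm (f n)) :
    ∃ w ∈ PE.F, PE.graphNorm w ≤ ∑' n, PE.graphNorm (f n) ∧ ∀ᵐ x ∂m, ∀ n, f n x ≤ w x := by
  obtain ⟨w, hw, hlim⟩ := PE.exists_tendsto_graphNorm_of_summable hp hf hs
  have hS : ∀ N, ∑ i ∈ Finset.range N, f i ∈ PE.F := fun N => PE.sum_mem _ fun i _ => hf i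
  refine ⟨w, hw, ?_, ?_⟩
  · refine ge_of_tendsto (by simpa using hlim.add_const (∑' n, PE.graphNorm (f n)))
      (Eventually.of_forall fun N => ?_)
    calc PE.graphNorm w = PE.graphNorm ((∑ i ∈ Finset.range N, f i)
          - ((∑ i ∈ Finset.range N, f i) - w)) := by abel_nf
      _ ≤ PE.graphNorm (∑ i ∈ Finset.range N, f i) +
          PE.graphNorm ((∑ i ∈ Finset.range N, f i) - w) :=
        PE.graphNorm_sub_le hp (hS N) (PE.sub_mem (hS N) hw)
      _ ≤ ∑' n, PE.graphNorm (f n) + PE.graphNorm ((∑ i ∈ Finset.range N, f i) - w) := by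
        gcongr
        exact (PE.graphNorm_sum_le hp _ fun i _ => hf i).trans
          (hs.sum_le_tsum _ fun i _ => PE.graphNorm_nonneg (hf i))
      _ = _ := add_comm _ _
  · obtain ⟨ns, hns, hae⟩ :=
      PE.exists_seq_tendsto_ae_of_tendsto_graphNorm (by linarith) hS hw hlim
    filter_upwards [hae] with x hx n
    refine ge_of_tendsto hx ((eventually_ge_atTop (n + 1)).mono fun i hi => ?_)
    have hn : n ∈ Finset.range (ns i) :=
      Finset.mem_range.2 (lt_of_lt_of_le (Nat.lt_succ_self n) (hi.trans (hns.id_le i)))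
    simpa only [Finset.sum_apply] using
      Finset.single_le_sum (fun j _ => hnonneg j x) hn

theorem eLpNorm_rpow_le_E1 (hp : 0 < p) {w : X → ℝ} (hw : w ∈ PE.F) :
    eLpNorm w (ENNReal.ofReal p) m ^ p ≤ ENNReal.ofReal (E1 p m PE w) := by
  rw [← ENNReal.ofReal_toReal (PE.memLp w hw).eLpNorm_ne_top,
    ENNReal.ofReal_rpow_of_nonneg ENNReal.toReal_nonneg hp.le]
  exact ENNReal.ofReal_le_ofReal (le_add_of_nonneg_left (PE.nonneg w hw))

theorem measure_le_ofReal_E1 (hp : 0 < p) {U : Set X} {w : X → ℝ} (hw : w ∈ PE.F)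
    (h : ∀ᵐ x ∂m.restrict U, 1 ≤ w x) : m U ≤ ENNReal.ofReal (E1 p m PE w) := by
  have hU : m.restrict U univ ≤ m.restrict U {x | 1 ≤ ‖w x‖ₑ} :=
    measure_mono_ae <| h.mono fun x hx _ => by
      change 1 ≤ ‖w x‖ₑ
      rw [Real.enorm_eq_ofReal_abs]
      exact ENNReal.one_le_ofReal.2 (hx.trans (le_abs_self _))
  calc m U = m.restrict U univ := (Measure.restrict_apply_univ U).symm
    _ ≤ m {x | 1 ≤ ‖w x‖ₑ} := hU.trans (Measure.restrict_le_self _)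
    _ ≤ eLpNorm w (ENNReal.ofReal p) m ^ p := by
      simpa [ENNReal.toReal_ofReal hp.le] using meas_ge_le_mul_pow_eLpNorm_enorm m
        (ENNReal.ofReal_pos.2 hp).ne' ENNReal.ofReal_ne_top (PE.memLp w hw).1 one_ne_zero
        (by simp)
    _ ≤ ENNReal.ofReal (E1 p m PE w) := PE.eLpNorm_rpow_le_E1 hp hw

theorem measure_le_cap1 (hp : 0 < p) (A : Set X) : m A ≤ cap1 p m PE A :=
  le_iInf₂ fun B _ => le_iInf fun hAB => (measure_mono hAB).trans <| le_sInf <| by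
    rintro _ ⟨w, ⟨hw, h⟩, rfl⟩
    exact PE.measure_le_ofReal_E1 hp hw h

theorem cap1_le_ofReal_E1 {U : Set X} (hU : IsOpen U) {w : X → ℝ} (hw : w ∈ PE.F)
    (h : ∀ᵐ x ∂m.restrict U, 1 ≤ w x) : cap1 p m PE U ≤ ENNReal.ofReal (E1 p m PE w) :=
  iInf₂_le_of_le U hU <| iInf_le_of_le subset_rfl <| sInf_le ⟨w, ⟨hw, h⟩, rfl⟩

theorem cap1_le_of_summable [OpensMeasurableSpace X] (hp : 1 ≤ p) {U : Set X} (hU : IsOpen U)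
    {f : ℕ → X → ℝ} (hf : ∀ n, f n ∈ PE.F) (hnonneg : ∀ n x, 0 ≤ f n x)
    (hs : Summable fun n => PE.graphNorm (f n)) (hcover : ∀ x ∈ U, ∃ n, 1 ≤ f n x) :
    cap1 p m PE U ≤ ENNReal.ofReal (2 * (∑' n, PE.graphNorm (f n)) ^ p) := by
  obtain ⟨w, hw, hnorm, hle⟩ := PE.exists_ae_le_of_summable_graphNorm hp hf hnonneg hs
  have hU1 : ∀ᵐ x ∂m.restrict U, 1 ≤ w x := by
    filter_upwards [ae_restrict_of_ae hle, ae_restrict_mem hU.measurableSet] with x hx hxU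
    obtain ⟨n, hn⟩ := hcover x hxU
    exact hn.trans (hx n)
  refine (PE.cap1_le_ofReal_E1 hU hw hU1).trans (ENNReal.ofReal_le_ofReal ?_)
  calc E1 p m PE w ≤ 2 * PE.graphNorm w ^ p := PE.E1_le_graphNorm (by linarith) hw
    _ ≤ 2 * (∑' n, PE.graphNorm (f n)) ^ p := by
      gcongr
      exact PE.graphNorm_nonneg hw

theorem ae_exists_notMem_of_tendsto_cap1 (hp : 0 < p) {A : ℕ → Set X}
    (h : Tendsto (fun k => cap1 p m PE (A k)) atTop (𝓝 0)) : ∀ᵐ x ∂m, ∃ k, x ∉ A k := by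
  have hnull : m (⋂ k, A k) = 0 := le_antisymm (ge_of_tendsto' h fun k =>
    (measure_mono (iInter_subset A k)).trans (PE.measure_le_cap1 hp _)) zero_le
  refine measure_mono_null (fun x hx => mem_iInter.2 fun k => ?_) hnull
  by_contra hk
  exact hx ⟨k, hk⟩

theorem quasiContinuous_of_tendstoUniformlyOn_compl {u : ℕ → X → ℝ} {v : X → ℝ}
    {A : ℕ → Set X} (hA : ∀ k, IsOpen (A k))
    (hcap : Tendsto (fun k => cap1 p m PE (A k)) atTop (𝓝 0)) (hu : ∀ n, Continuous (u n))
    (hunif : ∀ k, TendstoUniformlyOn u v atTop (A k)ᶜ) : QuasiContinuous p m PE v := by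
  intro ε hε
  obtain ⟨k, hk⟩ := (hcap.eventually (gt_mem_nhds (ENNReal.ofReal_pos.2 hε))).exists
  refine ⟨A k, hA k, hk, ?_⟩
  rw [← compl_eq_univ_sdiff]
  exact (hunif k).continuousOn (Frequently.of_forall fun n => (hu n).continuousOn)

theorem ae_eq_of_tendstoUniformlyOn_compl (hp : 0 < p) {u : ℕ → X → ℝ} {v g : X → ℝ}
    {A : ℕ → Set X} (hcap : Tendsto (fun k => cap1 p m PE (A k)) atTop (𝓝 0))
    (hu : ∀ n, u n ∈ PE.F) (hg : g ∈ PE.F)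
    (hlim : Tendsto (fun n => PE.graphNorm (u n - g)) atTop (𝓝 0))
    (hunif : ∀ k, TendstoUniformlyOn u v atTop (A k)ᶜ) : v =ᵐ[m] g := by
  obtain ⟨ns, hns, hae⟩ := PE.exists_seq_tendsto_ae_of_tendsto_graphNorm hp hu hg hlim
  filter_upwards [hae, PE.ae_exists_notMem_of_tendsto_cap1 hp hcap] with x hx ⟨k, hk⟩
  exact tendsto_nhds_unique (((hunif k).tendsto_at hk).comp hns.tendsto_atTop) hx

theorem summable_two_pow_mul_graphNorm_sub (hp : 1 ≤ p) {u : ℕ → X → ℝ} {v : X → ℝ}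
    (hu : ∀ n, u n ∈ PE.F) (hv : v ∈ PE.F) {C : ℝ}
    (h : ∀ n, PE.graphNorm (u n - v) ≤ C * (1 / 4) ^ n) :
    Summable fun n => 2 ^ n * PE.graphNorm (u (n + 1) - u n) := by
  have hC : 0 ≤ C := by simpa using (PE.graphNorm_nonneg (PE.sub_mem (hu 0) hv)).trans (h 0)
  refine Summable.of_nonneg_of_le
    (fun n => mul_nonneg (by positivity) (PE.graphNorm_nonneg (PE.sub_mem (hu (n + 1)) (hu n))))
    (fun n => ?_) (summable_geometric_two.mul_left (2 * C))
  calc 2 ^ n * PE.graphNorm (u (n + 1) - u n)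
      = 2 ^ n * PE.graphNorm ((u (n + 1) - v) - (u n - v)) := by rw [sub_sub_sub_cancel_right]
    _ ≤ 2 ^ n * (PE.graphNorm (u (n + 1) - v) + PE.graphNorm (u n - v)) := by
      gcongr
      exact PE.graphNorm_sub_le hp (PE.sub_mem (hu (n + 1)) hv) (PE.sub_mem (hu n) hv)
    _ ≤ 2 ^ n * (C * (1 / 4) ^ (n + 1) + C * (1 / 4) ^ n) := by gcongr <;> apply h
    _ = 5 / 4 * C * (2 ^ n * (1 / 4) ^ n) := by ring
    _ = 5 / 4 * C * (1 / 2) ^ n := by rw [← mul_pow]; norm_num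
    _ ≤ 2 * C * (1 / 2) ^ n := by gcongr; norm_num

theorem cap1_jumpSet_le [OpensMeasurableSpace X] (hp : 1 ≤ p) {u : ℕ → X → ℝ}
    (hu : ∀ n, u n ∈ PE.F) (hcont : ∀ n, Continuous (u n))
    (hs : Summable fun n => 2 ^ n * PE.graphNorm (u (n + 1) - u n)) (k : ℕ) :
    cap1 p m PE (jumpSet u k) ≤ ENNReal.ofReal
      (2 * (∑' n, 2 ^ (n + k) * PE.graphNorm (u (n + k + 1) - u (n + k))) ^ p) := by
  have hjump : ∀ n, abs ∘ (u (n + 1) - u n) ∈ PE.F :=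
    fun n => PE.abs_comp_mem (PE.sub_mem (hu (n + 1)) (hu n))
  set f : ℕ → X → ℝ := fun n => (2 : ℝ) ^ (n + k) • (abs ∘ (u (n + k + 1) - u (n + k)))
    with hf_def
  have hf : ∀ n, f n ∈ PE.F := fun n => PE.smul_mem _ _ (hjump (n + k))
  have hle : ∀ n,
      PE.graphNorm (f n) ≤ 2 ^ (n + k) * PE.graphNorm (u (n + k + 1) - u (n + k)) := by
    intro n
    rw [PE.graphNorm_smul _ (hjump (n + k)), abs_of_pos (by positivity)]
    gcongr
    exact PE.graphNorm_abs_comp_le (by linarith) (PE.sub_mem (hu _) (hu _))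
  have hs' := (summable_nat_add_iff k).2 hs
  have hcover : ∀ x ∈ jumpSet u k, ∃ n, 1 ≤ f n x := by
    intro x hx
    obtain ⟨n, hn, hlarge⟩ := mem_iUnion₂.1 hx
    obtain ⟨j, rfl⟩ : ∃ j, n = j + k := ⟨n - k, by omega⟩
    refine ⟨j, ?_⟩
    calc (1 : ℝ) = 2 ^ (j + k) * (1 / 2) ^ (j + k) := by rw [← mul_pow]; norm_num
      _ ≤ f j x := by
        simp only [hf_def, Pi.smul_apply, smul_eq_mul, Function.comp_apply, Pi.sub_apply]
        exact mul_le_mul_of_nonneg_left (le_of_lt hlarge) (by positivity)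
  have hsf : Summable fun n => PE.graphNorm (f n) :=
    hs'.of_nonneg_of_le (fun n => PE.graphNorm_nonneg (hf n)) hle
  refine (PE.cap1_le_of_summable hp (isOpen_jumpSet hcont k) hf
    (fun n x => mul_nonneg (by positivity) (abs_nonneg _)) hsf hcover).trans ?_
  gcongr
  · exact tsum_nonneg fun n => PE.graphNorm_nonneg (hf n)
  · exact hle _

theorem tendsto_cap1_jumpSet [OpensMeasurableSpace X] (hp : 1 ≤ p) {u : ℕ → X → ℝ}
    (hu : ∀ n, u n ∈ PE.F) (hcont : ∀ n, Continuous (u n))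
    (hs : Summable fun n => 2 ^ n * PE.graphNorm (u (n + 1) - u n)) :
    Tendsto (fun k => cap1 p m PE (jumpSet u k)) atTop (𝓝 0) := by
  have hc : Continuous fun t : ℝ => ENNReal.ofReal (2 * t ^ p) :=
    ENNReal.continuous_ofReal.comp (continuous_const.mul (Real.continuous_rpow_const (by linarith)))
  have hbound := (hc.tendsto 0).comp
    (tendsto_sum_nat_add fun n => 2 ^ n * PE.graphNorm (u (n + 1) - u n))
  rw [Real.zero_rpow (by linarith), mul_zero, ENNReal.ofReal_zero] at hbound
  exact tendsto_of_tendsto_of_tendsto_of_le_of_le tendsto_const_nhds hbound (fun _ => zero_le)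
    (PE.cap1_jumpSet_le hp hu hcont hs)

end PEnergy

theorem statement_13_general {X : Type*} [MetricSpace X] [MeasurableSpace X] [BorelSpace X]
    (m : Measure X)
    (p : ℝ) (hp : 1 < p) (PE : PEnergy p m)
    (𝒞 : Set (X → ℝ))
    (h𝒞 : ∀ f ∈ 𝒞, f ∈ PE.F ∧ Continuous f ∧ HasCompactSupport f)
    (hdense : ∀ f ∈ PE.F, ∀ ε : ℝ, 0 < ε → ∃ g ∈ 𝒞, E1 p m PE (f - g) ^ (1 / p) < ε) :
    ∀ u ∈ PE.F, ∃ ut : X → ℝ, QuasiContinuous p m PE ut ∧ ut =ᵐ[m] u ∧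
      ∃ useq : ℕ → X → ℝ, (∀ n, useq n ∈ 𝒞) ∧
        Tendsto (fun n => E1 p m PE (useq n - u) ^ (1 / p)) atTop (𝓝 0) ∧
        ∃ Fc : ℕ → Set X, (∀ k, IsClosed (Fc k)) ∧ (∀ k, Fc k ⊆ Fc (k + 1)) ∧
          Tendsto (fun k => cap1 p m PE (Fc k)ᶜ) atTop (𝓝 0) ∧
          ∀ k, TendstoUniformlyOn useq ut atTop (Fc k) := by
  intro u hu
  have hp0 : 0 < p := zero_lt_one.trans hp
  choose useq hmem hclose using fun n : ℕ => hdense u hu ((1 / 4 : ℝ) ^ n) (by positivity)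
  have hF (n : ℕ) : useq n ∈ PE.F := (h𝒞 _ (hmem n)).1
  have hcont (n : ℕ) : Continuous (useq n) := (h𝒞 _ (hmem n)).2.1
  have hE1 (n : ℕ) : E1 p m PE (useq n - u) ^ (1 / p) ≤ (1 / 4) ^ n := by
    rw [PE.E1_sub_comm hp0 (hF n) hu]
    exact (hclose n).le
  have hnorm (n : ℕ) : PE.graphNorm (useq n - u) ≤ 2 * (1 / 4) ^ n :=
    (PE.graphNorm_le_E1 hp0 (PE.sub_mem (hF n) hu)).trans (by gcongr; exact hE1 n)
  have hgeom : Tendsto (fun n : ℕ => (1 / 4 : ℝ) ^ n) atTop (𝓝 0) :=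
    tendsto_pow_atTop_nhds_zero_of_lt_one (by norm_num) (by norm_num)
  have hlim : Tendsto (fun n => PE.graphNorm (useq n - u)) atTop (𝓝 0) :=
    squeeze_zero (fun n => PE.graphNorm_nonneg (PE.sub_mem (hF n) hu)) hnorm
      (by simpa using hgeom.const_mul 2)
  have hcap := PE.tendsto_cap1_jumpSet hp.le hF hcont
    (PE.summable_two_pow_mul_graphNorm_sub hp.le hF hu hnorm)
  have hunif (k : ℕ) : TendstoUniformlyOn useq (fun x => limUnder atTop fun n => useq n x)
      atTop (jumpSet useq k)ᶜ :=
    tendstoUniformlyOn_limUnder_of_dist_le_half_pow fun _ hx _ hn =>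
      dist_le_of_notMem_jumpSet hx hn
  refine ⟨_, PE.quasiContinuous_of_tendstoUniformlyOn_compl (isOpen_jumpSet hcont) hcap hcont hunif,
    PE.ae_eq_of_tendstoUniformlyOn_compl hp0 hcap hF hu hlim hunif,
    useq, hmem, squeeze_zero
      (fun n => Real.rpow_nonneg (PE.E1_nonneg (PE.sub_mem (hF n) hu)) _) hE1 hgeom,
    fun k => (jumpSet useq k)ᶜ, fun k => (isOpen_jumpSet hcont k).isClosed_compl,
    fun k => compl_subset_compl.2 (jumpSet_succ_subset useq k),
    by simpa only [compl_compl] using hcap, hunif⟩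

theorem statement_13 {X : Type*} [MetricSpace X] [LocallyCompactSpace X]
    [TopologicalSpace.SeparableSpace X] [MeasurableSpace X] [BorelSpace X]
    (m : Measure X) [m.Regular] [m.IsOpenPosMeasure]
    (p : ℝ) (hp : 1 < p) (PE : PEnergy p m)
    (𝒞 : Set (X → ℝ))
    (h𝒞 : ∀ f ∈ 𝒞, f ∈ PE.F ∧ Continuous f ∧ HasCompactSupport f)
    (hdense : ∀ f ∈ PE.F, ∀ ε : ℝ, 0 < ε → ∃ g ∈ 𝒞, E1 p m PE (f - g) ^ (1 / p) < ε) :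
    ∀ u ∈ PE.F, ∃ ut : X → ℝ, QuasiContinuous p m PE ut ∧ ut =ᵐ[m] u ∧
      ∃ useq : ℕ → X → ℝ, (∀ n, useq n ∈ 𝒞) ∧
        Tendsto (fun n => E1 p m PE (useq n - u) ^ (1 / p)) atTop (𝓝 0) ∧
        ∃ Fc : ℕ → Set X, (∀ k, IsClosed (Fc k)) ∧ (∀ k, Fc k ⊆ Fc (k + 1)) ∧
          Tendsto (fun k => cap1 p m PE (Fc k)ᶜ) atTop (𝓝 0) ∧
          ∀ k, TendstoUniformlyOn useq ut atTop (Fc k) :=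
  statement_13_general m p hp PE 𝒞 h𝒞 hdense
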